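/- Let k > 0, j₁, j₂, m, q₀ be real, I ⊆ ℝ an open set, and S̃ : I → ℝ differentiable such that for all q ∈ I: (1 + k²q²/4) S̃′(q)² − k q (j₁ + j₂) S̃′(q) + k² j₁² q² + 2 j₁ j₂ + j₂² + m² = 0. Define φ(x) = e^{k x²/2}(q₀ − x⁴) and S(x) = S̃(φ(x)) − j₁ x¹ − (2 j₁ + j₂) x² + k j₁ (x⁴ − q₀) x³. Then at every x ∈ ℝ⁴ with φ(x) ∈ I, the function S satisfies the geodesic Hamilton–Jacobi equation of the McLenaghan–Tariq–Tupper spacetime: 2 (∂₁S)(∂₂S − 2 ∂₁S) + e^{−k x²}(k x³ ∂₁S + ∂₄S)² + e^{k x²}(∂₃S)² + (∂₂S − 2 ∂₁S)² + m² = 0. -/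

import Mathlib

/-- Partial derivative `∂f/∂xⁱ` of a real-valued function on `ℝ⁴`. -/
noncomputable def pd (i : Fin 4) (f : (Fin 4 → ℝ) → ℝ) (x : Fin 4 → ℝ) : ℝ :=
  fderiv ℝ f x (Pi.single i 1)

/-- The map `φ(x) = e^{k x²/2}(q₀ − x⁴)`. -/
noncomputable def φmap (k q₀ : ℝ) (x : Fin 4 → ℝ) : ℝ :=
  Real.exp (k * x 1 / 2) * (q₀ - x 3)

/-- The candidate complete integral
`S(x) = S̃(φ(x)) − j₁x¹ − (2j₁+j₂)x² + kj₁(x⁴ − q₀)x³`. -/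
noncomputable def Sfun (k j₁ j₂ q₀ : ℝ) (St : ℝ → ℝ) (x : Fin 4 → ℝ) : ℝ :=
  St (φmap k q₀ x) - j₁ * x 0 - (2 * j₁ + j₂) * x 1 + k * j₁ * (x 3 - q₀) * x 2

open ContinuousLinearMap

/-!
The gradient of `S` is explicit:
`∂₁S = -j₁`, `∂₂S = (k/2) φ S̃'(φ) - (2j₁ + j₂)`, `∂₃S = k j₁ (x⁴ - q₀)`,
`∂₄S = -e^{kx²/2} S̃'(φ) + k j₁ x³`. Substituting, `∂₂S - 2∂₁S = (k/2) φ S̃'(φ) - j₂`,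
`k x³ ∂₁S + ∂₄S = -e^{kx²/2} S̃'(φ)` and `e^{kx²} (∂₃S)² = k² j₁² φ²`, so the weights
`e^{∓kx²}` cancel and the geodesic Hamilton–Jacobi expression becomes the left-hand side
of the reduced equation at `q = φ(x)`.
-/

theorem pd_eq_of_hasFDerivAt {f : (Fin 4 → ℝ) → ℝ} {f' : (Fin 4 → ℝ) →L[ℝ] ℝ}
    {x : Fin 4 → ℝ} (h : HasFDerivAt f f' x) (i : Fin 4) :
    pd i f x = f' (Pi.single i 1) := by
  rw [pd, h.fderiv]

theorem hasFDerivAt_φmap (k q₀ : ℝ) (x : Fin 4 → ℝ) :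
    HasFDerivAt (φmap k q₀)
      ((k / 2 * φmap k q₀ x) • (proj 1 : (Fin 4 → ℝ) →L[ℝ] ℝ)
        - Real.exp (k * x 1 / 2) • proj 3) x := by
  have hexp := ((hasFDerivAt_apply (1 : Fin 4) x).const_mul (k / 2)).exp
  simp only [← mul_div_right_comm] at hexp
  refine (hexp.mul ((hasFDerivAt_const q₀ x).sub (hasFDerivAt_apply (3 : Fin 4) x))).congr_fderiv
    ?_
  ext i
  simp only [φmap, Pi.sub_apply, add_apply, sub_apply, neg_apply, smul_apply, proj_apply,
    smul_eq_mul, zero_sub, smul_neg]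
  ring

theorem pd_Sfun {k j₁ j₂ q₀ : ℝ} {St : ℝ → ℝ} {x : Fin 4 → ℝ}
    (hSt : DifferentiableAt ℝ St (φmap k q₀ x)) :
    pd 0 (Sfun k j₁ j₂ q₀ St) x = -j₁ ∧
    pd 1 (Sfun k j₁ j₂ q₀ St) x =
      k / 2 * φmap k q₀ x * deriv St (φmap k q₀ x) - (2 * j₁ + j₂) ∧
    pd 2 (Sfun k j₁ j₂ q₀ St) x = k * j₁ * (x 3 - q₀) ∧
    pd 3 (Sfun k j₁ j₂ q₀ St) x =
      -(Real.exp (k * x 1 / 2) * deriv St (φmap k q₀ x)) + k * j₁ * x 2 := by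
  have hS : HasFDerivAt (Sfun k j₁ j₂ q₀ St) _ x :=
    (((hSt.hasDerivAt.comp_hasFDerivAt x (hasFDerivAt_φmap k q₀ x)).sub
      ((hasFDerivAt_apply (0 : Fin 4) x).const_mul j₁)).sub
      ((hasFDerivAt_apply (1 : Fin 4) x).const_mul (2 * j₁ + j₂))).add
      ((((hasFDerivAt_apply (3 : Fin 4) x).sub_const q₀).const_mul (k * j₁)).mul
        (hasFDerivAt_apply (2 : Fin 4) x))
  simp only [pd_eq_of_hasFDerivAt hS]
  refine ⟨?_, ?_, ?_, ?_⟩ <;>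
    simp only [add_apply, sub_apply, smul_apply, proj_apply, smul_eq_mul, Pi.single_eq_same,
      Pi.single_eq_of_ne, ne_eq, Fin.reduceEq, not_false_eq_true, zero_ne_one, one_ne_zero] <;>
    ring

theorem geodesic_HJ_complete_integral_general (k j₁ j₂ m q₀ : ℝ)
    (I : Set ℝ)
    (St : ℝ → ℝ) (hSt : ∀ q ∈ I, DifferentiableAt ℝ St q)
    (hODE : ∀ q ∈ I,
      (1 + k ^ 2 * q ^ 2 / 4) * (deriv St q) ^ 2 - k * q * (j₁ + j₂) * deriv St q
        + k ^ 2 * j₁ ^ 2 * q ^ 2 + 2 * j₁ * j₂ + j₂ ^ 2 + m ^ 2 = 0)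
    (x : Fin 4 → ℝ) (hx : φmap k q₀ x ∈ I) :
    2 * pd 0 (Sfun k j₁ j₂ q₀ St) x *
        (pd 1 (Sfun k j₁ j₂ q₀ St) x - 2 * pd 0 (Sfun k j₁ j₂ q₀ St) x)
      + Real.exp (-(k * x 1)) *
        (k * x 2 * pd 0 (Sfun k j₁ j₂ q₀ St) x + pd 3 (Sfun k j₁ j₂ q₀ St) x) ^ 2
      + Real.exp (k * x 1) * (pd 2 (Sfun k j₁ j₂ q₀ St) x) ^ 2
      + (pd 1 (Sfun k j₁ j₂ q₀ St) x - 2 * pd 0 (Sfun k j₁ j₂ q₀ St) x) ^ 2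
      + m ^ 2 = 0 := by
  obtain ⟨h0, h1, h2, h3⟩ := pd_Sfun (j₁ := j₁) (j₂ := j₂) (hSt _ hx)
  have hreduced := hODE _ hx
  set d := deriv St (φmap k q₀ x)
  set E := Real.exp (k * x 1 / 2)
  have hsq : Real.exp (k * x 1) = E ^ 2 := by
    rw [← Real.exp_nat_mul]; ring_nf
  have hinv : Real.exp (-(k * x 1)) * E ^ 2 = 1 := by
    rw [← hsq, ← Real.exp_add, neg_add_cancel, Real.exp_zero]
  have hφ : φmap k q₀ x = E * (q₀ - x 3) := rfl
  rw [h0, h1, h2, h3, hsq, hφ]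
  rw [hφ] at hreduced
  linear_combination hreduced + d ^ 2 * hinv

/-- If `S̃` is differentiable on the open set `I` and solves the reduced
Hamilton–Jacobi equation
`(1 + k²q²/4)S̃′(q)² − kq(j₁+j₂)S̃′(q) + k²j₁²q² + 2j₁j₂ + j₂² + m² = 0` on `I`, then at
every `x` with `φ(x) ∈ I` the function `S` satisfies the geodesic Hamilton–Jacobi equation
of the McLenaghan–Tariq–Tupper spacetime. -/
theorem geodesic_HJ_complete_integral (k j₁ j₂ m q₀ : ℝ) (hk : 0 < k)
    (I : Set ℝ) (hI : IsOpen I)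
    (St : ℝ → ℝ) (hSt : ∀ q ∈ I, DifferentiableAt ℝ St q)
    (hODE : ∀ q ∈ I,
      (1 + k ^ 2 * q ^ 2 / 4) * (deriv St q) ^ 2 - k * q * (j₁ + j₂) * deriv St q
        + k ^ 2 * j₁ ^ 2 * q ^ 2 + 2 * j₁ * j₂ + j₂ ^ 2 + m ^ 2 = 0)
    (x : Fin 4 → ℝ) (hx : φmap k q₀ x ∈ I) :
    2 * pd 0 (Sfun k j₁ j₂ q₀ St) x *
        (pd 1 (Sfun k j₁ j₂ q₀ St) x - 2 * pd 0 (Sfun k j₁ j₂ q₀ St) x)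
      + Real.exp (-(k * x 1)) *
        (k * x 2 * pd 0 (Sfun k j₁ j₂ q₀ St) x + pd 3 (Sfun k j₁ j₂ q₀ St) x) ^ 2
      + Real.exp (k * x 1) * (pd 2 (Sfun k j₁ j₂ q₀ St) x) ^ 2
      + (pd 1 (Sfun k j₁ j₂ q₀ St) x - 2 * pd 0 (Sfun k j₁ j₂ q₀ St) x) ^ 2
      + m ^ 2 = 0 :=
  geodesic_HJ_complete_integral_general k j₁ j₂ m q₀ I St hSt hODE x hx
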